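/- Let f : ℝⁿ → ℝ be twice continuously differentiable with Hessian Lipschitz continuous with constant L (in operator norm), let x ∈ ℝⁿ, and suppose ∇²f(x) is invertible. Let y¹, …, yᵖ ∈ ℝⁿ with p ≥ n, set zˡ = ∇²f(x)(yˡ − x) for ℓ = 1, …, p, Δ_y = max_{1 ≤ ℓ ≤ p} ‖yˡ − x‖, and Δ_z = max_{1 ≤ ℓ ≤ p} ‖zˡ‖, assumed positive. Let M_L^z be the p×n matrix whose ℓ-th row is (1/Δ_z)(zˡ)ᵀ, and suppose there is an n×p matrix A with A M_L^z = Iₙ and operator norm ‖A‖ ≤ Λ_z. If dᴺ ∈ ℝⁿ satisfies the Newton-direction interpolating conditions (zˡ)ᵀ dᴺ = −f(yˡ) + f(x) + ½ (yˡ − x)ᵀ zˡ for all ℓ = 1, …, p, then ‖ −∇²f(x)⁻¹ ∇f(x) − dᴺ ‖ ≤ Λ_z · √p · (L/6) · Δ_y³ / Δ_z. -/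

import Mathlib

open scoped Matrix RealInnerProductSpace Matrix.Norms.L2Operator

/-! By symmetry of the Hessian and the interpolation conditions, the error
`e = -∇²f(x)⁻¹ ∇f(x) - dᴺ` satisfies
`⟪zˡ, e⟫ = f(yˡ) - f(x) - ⟪∇f(x), yˡ - x⟫ - ½ ⟪∇²f(x) (yˡ - x), yˡ - x⟫`,
a second-order Taylor remainder, which a Lipschitz Hessian bounds by `L/6 ‖yˡ - x‖³`.
So every entry of `M_L^z e` is at most `L Δ_y³ / (6 Δ_z)`, whence
`‖M_L^z e‖ ≤ √p L Δ_y³ / (6 Δ_z)`, and `e = A M_L^z e` gives the bound. -/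

theorem norm_sub_le_of_norm_deriv_le_mul_pow {F : Type*} [NormedAddCommGroup F]
    [NormedSpace ℝ F] {φ φ' : ℝ → F} {C : ℝ} {k : ℕ} (hφ : ∀ t, HasDerivAt φ (φ' t) t)
    (hbound : ∀ t ∈ Set.Ico (0 : ℝ) 1, ‖φ' t‖ ≤ C * t ^ k) :
    ‖φ 1 - φ 0‖ ≤ C / (k + 1) := by
  have hB : ∀ t : ℝ, HasDerivAt (fun s => C * s ^ (k + 1) / (k + 1)) (C * t ^ k) t := fun t => by
    refine (((hasDerivAt_pow (k + 1) t).const_mul C).div_const ((k : ℝ) + 1)).congr_deriv ?_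
    push_cast
    field_simp
  simpa using image_norm_le_of_norm_deriv_right_le_deriv_boundary (a := 0) (b := 1)
    (f := fun t => φ t - φ 0) (fun t _ => ((hφ t).sub_const _).continuousAt.continuousWithinAt)
    (fun t _ => ((hφ t).sub_const _).hasDerivWithinAt) (by simp) hB hbound
    (Set.right_mem_Icc.2 zero_le_one)

section Taylor

variable {E : Type*} [NormedAddCommGroup E]

theorem norm_taylor_remainder_le_of_lipschitz_fderiv [NormedSpace ℝ E] {F : Type*}
    [NormedAddCommGroup F] [NormedSpace ℝ F] {g : E → F} {g' : E → E →L[ℝ] F} {L : ℝ} {x : E}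
    (hg : ∀ u, HasFDerivAt g (g' u) u) (hLip : ∀ u, ‖g' u - g' x‖ ≤ L * ‖u - x‖) (h : E) :
    ‖g (x + h) - g x - g' x h‖ ≤ L / 2 * ‖h‖ ^ 2 := by
  have hline : ∀ t : ℝ, HasDerivAt (fun s : ℝ => x + s • h) h t := fun t => by
    simpa using ((hasDerivAt_id t).smul_const h).const_add x
  have hφ : ∀ t : ℝ, HasDerivAt (fun s : ℝ => g (x + s • h) - s • g' x h)
      (g' (x + t • h) h - g' x h) t := fun t =>
    (((hg _).comp_hasDerivAt t (hline t)).sub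
      ((hasDerivAt_id t).smul_const (g' x h))).congr_deriv (by simp)
  have hbound : ∀ t ∈ Set.Ico (0 : ℝ) 1,
      ‖g' (x + t • h) h - g' x h‖ ≤ L * ‖h‖ ^ 2 * t ^ 1 := fun t ht => calc
    ‖g' (x + t • h) h - g' x h‖ ≤ ‖g' (x + t • h) - g' x‖ * ‖h‖ :=
      (g' (x + t • h) - g' x).le_opNorm h
    _ ≤ L * ‖x + t • h - x‖ * ‖h‖ := by gcongr; exact hLip _
    _ = L * ‖h‖ ^ 2 * t ^ 1 := by
      rw [add_sub_cancel_left, norm_smul, Real.norm_of_nonneg ht.1]; ring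
  convert norm_sub_le_of_norm_deriv_le_mul_pow hφ hbound using 1
  · simp only [one_smul, zero_smul, add_zero, sub_zero]
    congr 1
    abel
  · norm_num; ring

theorem abs_taylor_remainder_le_of_lipschitz_hessian [InnerProductSpace ℝ E] [CompleteSpace E]
    {f : E → ℝ} {g : E → E} {H : E → E →L[ℝ] E} {L : ℝ} {x : E}
    (hf : ∀ u, HasGradientAt f (g u) u) (hg : ∀ u, HasFDerivAt g (H u) u)
    (hLip : ∀ u, ‖H u - H x‖ ≤ L * ‖u - x‖) (h : E) :
    |f (x + h) - f x - ⟪g x, h⟫ - 1 / 2 * ⟪H x h, h⟫| ≤ L / 6 * ‖h‖ ^ 3 := by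
  have hline : ∀ t : ℝ, HasDerivAt (fun s : ℝ => x + s • h) h t := fun t => by
    simpa using ((hasDerivAt_id t).smul_const h).const_add x
  have hψ : ∀ t : ℝ, HasDerivAt
      (fun s : ℝ => f (x + s • h) - s * ⟪g x, h⟫ - s ^ 2 / 2 * ⟪H x h, h⟫)
      ⟪g (x + t • h) - g x - H x (t • h), h⟫ t := fun t => by
    have hft : HasDerivAt (fun s : ℝ => f (x + s • h)) ⟪g (x + t • h), h⟫ t :=
      ((hf _).hasFDerivAt.comp_hasDerivAt t (hline t)).congr_deriv (by simp)
    refine ((hft.sub ((hasDerivAt_id t).mul_const ⟪g x, h⟫)).sub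
      (((hasDerivAt_pow 2 t).div_const 2).mul_const ⟪H x h, h⟫)).congr_deriv ?_
    simp only [inner_sub_left, map_smul, real_inner_smul_left]
    norm_num
  have hbound : ∀ t ∈ Set.Ico (0 : ℝ) 1,
      ‖⟪g (x + t • h) - g x - H x (t • h), h⟫‖ ≤ L / 2 * ‖h‖ ^ 3 * t ^ 2 := fun t ht => calc
    ‖⟪g (x + t • h) - g x - H x (t • h), h⟫‖ ≤ ‖g (x + t • h) - g x - H x (t • h)‖ * ‖h‖ :=
      norm_inner_le_norm _ _
    _ ≤ L / 2 * ‖t • h‖ ^ 2 * ‖h‖ := by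
      gcongr; exact norm_taylor_remainder_le_of_lipschitz_fderiv hg hLip _
    _ = L / 2 * ‖h‖ ^ 3 * t ^ 2 := by
      rw [norm_smul, Real.norm_of_nonneg ht.1]; ring
  convert norm_sub_le_of_norm_deriv_le_mul_pow hψ hbound using 1
  · rw [Real.norm_eq_abs]
    simp only [one_smul, zero_smul, add_zero]
    congr 1
    ring
  · norm_num; ring

theorem isSymmetric_of_hasFDerivAt_gradient [InnerProductSpace ℝ E] [CompleteSpace E]
    {f : E → ℝ} {g : E → E} {H : E →L[ℝ] E} {x : E}
    (hf : ∀ u, HasGradientAt f (g u) u) (hg : HasFDerivAt g H x) :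
    (H : E →ₗ[ℝ] E).IsSymmetric := fun v w => by
  let D := (InnerProductSpace.toDual ℝ E).toContinuousLinearEquiv.toContinuousLinearMap
  have := second_derivative_symmetric (fun u => (hf u).hasFDerivAt)
    (D.hasFDerivAt.comp x hg) v w
  simpa [D, real_inner_comm] using this

end Taylor

theorem nonneg_of_norm_sub_le_mul_norm_sub {E F : Type*} [NormedAddCommGroup E] [Nontrivial E]
    [SeminormedAddCommGroup F] {φ : E → F} {L : ℝ}
    (hφ : ∀ u v, ‖φ u - φ v‖ ≤ L * ‖u - v‖) : 0 ≤ L := by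
  obtain ⟨u, hu⟩ := exists_ne (0 : E)
  refine nonneg_of_mul_nonneg_left ((norm_nonneg _).trans (hφ u 0)) ?_
  simpa using hu

theorem EuclideanSpace.norm_le_sqrt_card_mul {𝕜 ι : Type*} [RCLike 𝕜] [Fintype ι]
    {w : EuclideanSpace 𝕜 ι} {c : ℝ} (hw : ∀ i, ‖w i‖ ≤ c) :
    ‖w‖ ≤ √(Fintype.card ι) * c := by
  cases isEmpty_or_nonempty ι with
  | inl _ => simp [Subsingleton.elim w 0]
  | inr hι =>
    have hc : 0 ≤ c := (norm_nonneg _).trans (hw hι.some)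
    calc ‖w‖ = √(∑ i, ‖w i‖ ^ 2) := EuclideanSpace.norm_eq w
      _ ≤ √(∑ _ : ι, c ^ 2) := by gcongr with i; exact hw i
      _ = √(Fintype.card ι) * c := by
        rw [Finset.sum_const, Finset.card_univ, nsmul_eq_mul, Real.sqrt_mul (by positivity),
          Real.sqrt_sq hc]

theorem Matrix.norm_le_l2_opNorm_mul_norm_mulVec_of_mul_eq_one {𝕜 m n : Type*} [RCLike 𝕜]
    [Fintype m] [Fintype n] [DecidableEq m] [DecidableEq n] {A : Matrix n m 𝕜} {M : Matrix m n 𝕜}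
    (hAM : A * M = 1) (v : EuclideanSpace 𝕜 n) :
    ‖v‖ ≤ ‖A‖ * ‖WithLp.toLp 2 (M *ᵥ v)‖ := by
  simpa [Matrix.mulVec_mulVec, hAM] using A.l2_opNorm_mulVec (WithLp.toLp 2 (M *ᵥ v))

theorem Matrix.mulVec_apply_eq_mul_inner {m n : Type*} [Fintype n] {M : Matrix m n ℝ} {c : ℝ}
    {z : m → EuclideanSpace ℝ n} (hM : ∀ ℓ i, M ℓ i = c * z ℓ i) (v : EuclideanSpace ℝ n)
    (ℓ : m) : (M *ᵥ v) ℓ = c * ⟪z ℓ, v⟫ := by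
  simp only [Matrix.mulVec, dotProduct, hM, EuclideanSpace.inner_eq_star_dotProduct,
    Finset.mul_sum, star_trivial]
  exact Finset.sum_congr rfl fun i _ => by ring

theorem newton_direction_recovery_error_bound_general
    {n p : ℕ}
    (f : EuclideanSpace ℝ (Fin n) → ℝ)
    (g : EuclideanSpace ℝ (Fin n) → EuclideanSpace ℝ (Fin n))
    (hess : EuclideanSpace ℝ (Fin n) → EuclideanSpace ℝ (Fin n) →L[ℝ] EuclideanSpace ℝ (Fin n))
    (L : ℝ)
    (hg : ∀ u, HasGradientAt f (g u) u)
    (hhess : ∀ u, HasFDerivAt g (hess u) u)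
    (hLip : ∀ u v, ‖hess u - hess v‖ ≤ L * ‖u - v‖)
    (x : EuclideanSpace ℝ (Fin n))
    -- invertibility of `∇²f(x)`, with inverse `Hinv`:
    (Hinv : EuclideanSpace ℝ (Fin n) →L[ℝ] EuclideanSpace ℝ (Fin n))
    (hinv₂ : ∀ u, hess x (Hinv u) = u)
    (y : Fin p → EuclideanSpace ℝ (Fin n))
    (z : Fin p → EuclideanSpace ℝ (Fin n)) (hz : ∀ ℓ, z ℓ = hess x (y ℓ - x))
    (Δy : ℝ) (hΔy : IsGreatest (Set.range fun ℓ => ‖y ℓ - x‖) Δy)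
    (Δz : ℝ) (hΔzpos : 0 < Δz)
    (Mz : Matrix (Fin p) (Fin n) ℝ) (hMz : ∀ ℓ i, Mz ℓ i = (1 / Δz) * z ℓ i)
    (Λz : ℝ)
    (A : Matrix (Fin n) (Fin p) ℝ) (hA : A * Mz = 1) (hAnorm : ‖A‖ ≤ Λz)
    (dN : EuclideanSpace ℝ (Fin n))
    (hdN : ∀ ℓ : Fin p, ⟪z ℓ, dN⟫ = -f (y ℓ) + f x + (1 / 2) * ⟪y ℓ - x, z ℓ⟫) :
    ‖-Hinv (g x) - dN‖ ≤ Λz * Real.sqrt p * (L / 6) * Δy ^ 3 / Δz := by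
  set e := -Hinv (g x) - dN
  -- in dimension zero `L` may be negative
  rcases subsingleton_or_nontrivial (EuclideanSpace ℝ (Fin n)) with hE | hE
  · obtain ⟨ℓ, hℓ⟩ := hΔy.1
    simp [Subsingleton.elim e 0, ← hℓ, Subsingleton.elim (y ℓ) x]
  have hL : 0 ≤ L := nonneg_of_norm_sub_le_mul_norm_sub hLip
  have hH : ∀ v w, ⟪hess x v, w⟫ = ⟪v, hess x w⟫ :=
    isSymmetric_of_hasFDerivAt_gradient hg (hhess x)
  have hrow : ∀ ℓ, ‖(Mz *ᵥ e) ℓ‖ ≤ L / 6 * Δy ^ 3 / Δz := fun ℓ => by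
    have hinterp : ⟪z ℓ, e⟫ =
        f (y ℓ) - f x - ⟪g x, y ℓ - x⟫ - 1 / 2 * ⟪hess x (y ℓ - x), y ℓ - x⟫ := by
      rw [inner_sub_right, hdN, hz, inner_neg_right, hH, hinv₂,
        real_inner_comm (hess x (y ℓ - x)), real_inner_comm (g x)]
      ring
    have htaylor := abs_taylor_remainder_le_of_lipschitz_hessian hg hhess (fun u => hLip u x)
      (y ℓ - x)
    rw [add_sub_cancel, ← hinterp] at htaylor
    rw [Matrix.mulVec_apply_eq_mul_inner hMz, norm_mul, Real.norm_eq_abs, Real.norm_eq_abs,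
      abs_of_pos (one_div_pos.2 hΔzpos), one_div_mul_eq_div]
    gcongr
    exact htaylor.trans (by gcongr; exact hΔy.2 ⟨ℓ, rfl⟩)
  calc ‖e‖ ≤ ‖A‖ * ‖WithLp.toLp 2 (Mz *ᵥ e)‖ :=
        Matrix.norm_le_l2_opNorm_mul_norm_mulVec_of_mul_eq_one hA e
    _ ≤ Λz * (√p * (L / 6 * Δy ^ 3 / Δz)) := by
        gcongr
        · exact (norm_nonneg _).trans hAnorm
        · simpa using
            EuclideanSpace.norm_le_sqrt_card_mul (w := WithLp.toLp 2 (Mz *ᵥ e)) hrow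
    _ = Λz * √p * (L / 6) * Δy ^ 3 / Δz := by ring

/-- Theorem 3.2 of the paper with explicit constants: error bound for the recovered Newton
direction in terms of a bound `Λ_z` on the (L2 operator) norm of a left inverse of the scaled
matrix `M_L^z`. -/
theorem newton_direction_recovery_error_bound
    {n p : ℕ} (hpn : p ≥ n)
    (f : EuclideanSpace ℝ (Fin n) → ℝ)
    (g : EuclideanSpace ℝ (Fin n) → EuclideanSpace ℝ (Fin n))
    (hess : EuclideanSpace ℝ (Fin n) → EuclideanSpace ℝ (Fin n) →L[ℝ] EuclideanSpace ℝ (Fin n))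
    (L : ℝ)
    (hg : ∀ u, HasGradientAt f (g u) u)
    (hhess : ∀ u, HasFDerivAt g (hess u) u)
    (hLip : ∀ u v, ‖hess u - hess v‖ ≤ L * ‖u - v‖)
    (x : EuclideanSpace ℝ (Fin n))
    -- invertibility of `∇²f(x)`, with inverse `Hinv`:
    (Hinv : EuclideanSpace ℝ (Fin n) →L[ℝ] EuclideanSpace ℝ (Fin n))
    (hinv₁ : ∀ u, Hinv (hess x u) = u) (hinv₂ : ∀ u, hess x (Hinv u) = u)
    (y : Fin p → EuclideanSpace ℝ (Fin n))
    (z : Fin p → EuclideanSpace ℝ (Fin n)) (hz : ∀ ℓ, z ℓ = hess x (y ℓ - x))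
    (Δy : ℝ) (hΔy : IsGreatest (Set.range fun ℓ => ‖y ℓ - x‖) Δy)
    (Δz : ℝ) (hΔz : IsGreatest (Set.range fun ℓ => ‖z ℓ‖) Δz) (hΔzpos : 0 < Δz)
    (Mz : Matrix (Fin p) (Fin n) ℝ) (hMz : ∀ ℓ i, Mz ℓ i = (1 / Δz) * z ℓ i)
    (Λz : ℝ)
    (A : Matrix (Fin n) (Fin p) ℝ) (hA : A * Mz = 1) (hAnorm : ‖A‖ ≤ Λz)
    (dN : EuclideanSpace ℝ (Fin n))
    (hdN : ∀ ℓ : Fin p, ⟪z ℓ, dN⟫ = -f (y ℓ) + f x + (1 / 2) * ⟪y ℓ - x, z ℓ⟫) :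
    ‖-Hinv (g x) - dN‖ ≤ Λz * Real.sqrt p * (L / 6) * Δy ^ 3 / Δz :=
  newton_direction_recovery_error_bound_general f g hess L hg hhess hLip x Hinv hinv₂ y z hz Δy hΔy
    Δz hΔzpos Mz hMz Λz A hA hAnorm dN hdN
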